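/- Let C_v ≥ 1 be a constant such that C̃_v(c,a) ≤ C_v · max{1, |c|_v, |a|_v} for all (c,a) ∈ K^{d-1}. Then for every 0 ≤ i ≤ d−2, every C ≥ 1 and every ε > 0 satisfying C^d·ε > max{1, C_v·C}, and every (c,a) ∈ K^{d-1} with max{|c|_v,|a|_v} ≥ C and (c,a) ∉ U_i(ε,C), one has g_{c,a,v}(c_i) ≤ log max{|c|_v,|a|_v} + (1/d)·log ε + (1/(d(d−1)))·log α_v. -/

import Mathlib

/-!
Outside the disc of radius `C̃_v(c,a)` the leading term of `P_{c,a}` dominates all others, so the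
ultrametric inequality gives `|P(z)|_v = |z|_v^d / |d|_v` there, while in general
`|P(z)|_v ≤ max{C̃_v, |z|_v}^d / |d|_v`. Hence `h(P z)` differs from `d·h(z)` by a bounded amount,
and more precisely `h(P z) ≤ d·h(z) + log α_v`; so `h(P^m z)/d^m` converges, and summing the
geometric series of errors gives `g(z) ≤ h(P z)/d + log α_v/(d(d-1))`. For `z = c_i` with
`(c,a) ∉ U_i(ε,C)` and `M = max{|c|_v,|a|_v}`, both `|P(c_i)|_v` and `C̃_v ≤ C_v·M` are at most
`ε·M^d` (the latter by the choice of `C` and `ε`), so `h(P c_i) ≤ log ε + d·log M`.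
-/

open Filter

noncomputable section

variable {K : Type*} [Field K]

/-- Elementary symmetric polynomial of degree `k` evaluated at `c = (c_1, …, c_{d-2})`. -/
def esymmK {n : ℕ} (c : Fin n → K) (k : ℕ) : K :=
  ∑ s ∈ Finset.powersetCard k (Finset.univ : Finset (Fin n)), ∏ i ∈ s, c i

/-- The polynomial `P_{c,a}` of degree `d = n + 2`:
`P_{c,a}(z) = z^d/d + ∑_{j=2}^{d-1} (-1)^{d-j} σ_{d-j}(c) z^j / j + a^d`. -/
def Pca {n : ℕ} (c : Fin n → K) (a z : K) : K :=
  z ^ (n + 2) / ((n + 2 : ℕ) : K)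
    + ∑ j ∈ Finset.Icc 2 (n + 1),
        ((-1 : K) ^ (n + 2 - j) * esymmK c (n + 2 - j) * z ^ j) / ((j : ℕ) : K)
    + a ^ (n + 2)

/-- The critical points `c_0 = 0, c_1, …, c_{d-2}` of `P_{c,a}`. -/
def crit {n : ℕ} (c : Fin n → K) (i : Fin (n + 1)) : K :=
  if h : (i : ℕ) = 0 then 0 else c ⟨(i : ℕ) - 1, by have := i.isLt; omega⟩

/-- `|c|_v = max_{1 ≤ i ≤ d-2} |c_i|_v` (with value `0` when there are no `c_i`'s). -/
def cnorm {n : ℕ} (v : AbsoluteValue K ℝ) (c : Fin n → K) : ℝ :=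
  Finset.fold max 0 (fun i => v (c i)) (Finset.univ : Finset (Fin n))

/-- `α_v = max_{1 ≤ j ≤ d} |j|_v⁻¹`. -/
def alphaV (v : AbsoluteValue K ℝ) (d : ℕ) : ℝ :=
  Finset.fold max 0 (fun j : ℕ => (v ((j : ℕ) : K))⁻¹) (Finset.Icc 1 d)

/-- `C_v(c,a) = max{ |d|_v^{1/(d-1)}, |d|_v^{1/d}·|a|_v,
max_{2≤j≤d-1} (|σ_{d-j}(c)|_v · |d/j|_v)^{1/(d-j)} }`, with `d = n + 2`. -/
def Cv {n : ℕ} (v : AbsoluteValue K ℝ) (c : Fin n → K) (a : K) : ℝ :=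
  max ((v (((n + 2 : ℕ) : K))) ^ ((1 : ℝ) / ((n : ℝ) + 1)))
    (max ((v (((n + 2 : ℕ) : K))) ^ ((1 : ℝ) / ((n : ℝ) + 2)) * v a)
      (Finset.fold max 0
        (fun j : ℕ =>
          (v (esymmK c (n + 2 - j)) * v (((n + 2 : ℕ) : K) / ((j : ℕ) : K)))
            ^ ((1 : ℝ) / ((n + 2 - j : ℕ) : ℝ)))
        (Finset.Icc 2 (n + 1))))

/-- `C̃_v(c,a) = max{ |a|_v, |c|_v, C_v(c,a) }`. -/
def Ctilde {n : ℕ} (v : AbsoluteValue K ℝ) (c : Fin n → K) (a : K) : ℝ :=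
  max (v a) (max (cnorm v c) (Cv v c a))

/-- `h_{c,a,v}(z) = log max{ C̃_v(c,a), |z|_v }`. -/
def hca {n : ℕ} (v : AbsoluteValue K ℝ) (c : Fin n → K) (a : K) (z : K) : ℝ :=
  Real.log (max (Ctilde v c a) (v z))

/-- `log⁺ = max{0, log}`. -/
def logPlus (x : ℝ) : ℝ := max 0 (Real.log x)

/-- `U_i(ε, C) = {(c,a) : max{|c|_v,|a|_v} ≥ C and |P_{c,a}(c_i)|_v ≥ ε·max{|c|_v,|a|_v}^d}`. -/
def Uset {n : ℕ} (v : AbsoluteValue K ℝ) (i : Fin (n + 1)) (ε C : ℝ) :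
    Set ((Fin n → K) × K) :=
  {p | C ≤ max (cnorm v p.1) (v p.2) ∧
       ε * max (cnorm v p.1) (v p.2) ^ (n + 2) ≤ v (Pca p.1 p.2 (crit p.1 i))}

open Topology

section GrowthSequence

variable {d B L : ℝ} {H : ℕ → ℝ}

lemma cauchySeq_div_pow_of_growth (hd : 1 < d) (hle : ∀ m, H (m + 1) ≤ d * H m + L)
    (hge : ∀ m, d * H m - B ≤ H (m + 1)) : CauchySeq fun m => H m / d ^ m := by
  refine cauchySeq_of_le_geometric d⁻¹ (max B L / d) (inv_lt_one_of_one_lt₀ hd) fun m => ?_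
  have hdm : 0 < d ^ (m + 1) := by positivity
  have hdiff : H (m + 1) / d ^ (m + 1) - H m / d ^ m = (H (m + 1) - d * H m) / d ^ (m + 1) := by
    field_simp
    ring
  have hbound : |H (m + 1) - d * H m| ≤ max B L := by
    rw [abs_le]
    constructor <;> linarith [hle m, hge m, le_max_left B L, le_max_right B L]
  calc dist (H m / d ^ m) (H (m + 1) / d ^ (m + 1))
      = |H (m + 1) - d * H m| / d ^ (m + 1) := by
        rw [Real.dist_eq, abs_sub_comm, hdiff, abs_div, abs_of_pos hdm]
    _ ≤ max B L / d ^ (m + 1) := by gcongr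
    _ = max B L / d * d⁻¹ ^ m := by
        rw [inv_pow, pow_succ]
        field_simp

/-- The errors `L / d ^ (m + 1)` sum to `L / ((d - 1) d ^ m)`, so adding this tail to
`H m / d ^ m` gives an antitone sequence with the same limit. -/
lemma le_of_tendsto_div_pow (hd : 1 < d) (hle : ∀ m, H (m + 1) ≤ d * H m + L) {g : ℝ}
    (hg : Tendsto (fun m => H m / d ^ m) atTop (𝓝 g)) :
    g ≤ H 1 / d + L / (d * (d - 1)) := by
  have hd1 : 0 < d - 1 := by linarith
  set w : ℕ → ℝ := fun m => (H m + L / (d - 1)) / d ^ m with hw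
  have hanti : Antitone w := by
    refine antitone_nat_of_succ_le fun m => ?_
    have hdm : 0 < d ^ m := by positivity
    calc w (m + 1) ≤ (d * H m + L + L / (d - 1)) / d ^ (m + 1) := by
          simp only [hw]
          gcongr
          exact hle m
      _ = w m := by
          simp only [hw]
          field_simp
          ring
  have hgeom : Tendsto (fun m => L / (d - 1) * d⁻¹ ^ m) atTop (𝓝 0) := by
    simpa using (tendsto_pow_atTop_nhds_zero_of_lt_one (by positivity)
      (inv_lt_one_of_one_lt₀ hd)).const_mul (L / (d - 1))
  have hwg : Tendsto w atTop (𝓝 g) := by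
    have hsplit : w = fun m => H m / d ^ m + L / (d - 1) * d⁻¹ ^ m := by
      funext m
      simp only [hw, inv_pow, div_eq_mul_inv, add_mul]
    simpa [hsplit] using hg.add hgeom
  calc g ≤ w 1 := hanti.le_of_tendsto hwg 1
    _ = H 1 / d + L / (d * (d - 1)) := by
        simp only [hw, pow_one]
        field_simp

end GrowthSequence

section Ultrametric

variable {R : Type*} [Semiring R] {v : AbsoluteValue R ℝ}

lemma IsNonarchimedean.abv_sum_le {ι : Type*} (hv : IsNonarchimedean v) {s : Finset ι}
    {f : ι → R} {t : ℝ} (ht : 0 ≤ t) (h : ∀ i ∈ s, v (f i) ≤ t) : v (∑ i ∈ s, f i) ≤ t :=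
  Finset.sum_induction f (fun x => v x ≤ t) (fun _ _ hx hy => (hv _ _).trans (max_le hx hy))
    (by simpa using ht) h

lemma IsNonarchimedean.abv_sum_lt {ι : Type*} (hv : IsNonarchimedean v) {s : Finset ι}
    {f : ι → R} {t : ℝ} (ht : 0 < t) (h : ∀ i ∈ s, v (f i) < t) : v (∑ i ∈ s, f i) < t :=
  Finset.sum_induction f (fun x => v x < t) (fun _ _ hx hy => (hv _ _).trans_lt (max_lt hx hy))
    (by simpa using ht) h

end Ultrametric

lemma le_pow_of_rpow_one_div_le {x y : ℝ} (hx : 0 ≤ x) (hy : 0 ≤ y) {m : ℕ} (hm : m ≠ 0)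
    (h : x ^ ((1 : ℝ) / m) ≤ y) : x ≤ y ^ m := by
  rwa [one_div, Real.rpow_inv_le_iff_of_pos hx hy (by positivity), Real.rpow_natCast] at h

lemma pow_mul_pow_le_pow_add {T s : ℝ} (hT : 0 ≤ T) (h : T ≤ s) (k j : ℕ) :
    T ^ k * s ^ j ≤ s ^ (k + j) := by
  rw [pow_add]
  have : 0 ≤ s ^ j := pow_nonneg (hT.trans h) j
  gcongr

lemma pow_mul_pow_lt_pow_add {T s : ℝ} (hT : 0 ≤ T) (h : T < s) {k : ℕ} (hk : k ≠ 0) (j : ℕ) :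
    T ^ k * s ^ j < s ^ (k + j) := by
  rw [pow_add]
  have : 0 < s ^ j := pow_pos (hT.trans_lt h) j
  gcongr

lemma mul_le_mul_pow_of_mul_lt_pow {A C M ε : ℝ} {k : ℕ} (hC : 0 < C) (hCM : C ≤ M)
    (hε : 0 ≤ ε) (h : A * C < C ^ (k + 1) * ε) : A * M ≤ ε * M ^ (k + 1) := by
  have hA : A < C ^ k * ε := by
    rw [pow_succ, mul_right_comm] at h
    exact lt_of_mul_lt_mul_right h hC.le
  calc A * M ≤ (M ^ k * ε) * M := by
        gcongr
        · exact hC.le.trans hCM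
        · exact hA.le.trans (by gcongr)
    _ = ε * M ^ (k + 1) := by ring

section Ctilde

variable (v : AbsoluteValue K ℝ) {n : ℕ} (c : Fin n → K) (a : K)

lemma inv_abv_natCast_le_alphaV {d : ℕ} (hd : 1 ≤ d) : (v (d : K))⁻¹ ≤ alphaV v d :=
  (Finset.le_fold_max _).2 (Or.inr ⟨d, Finset.mem_Icc.2 ⟨hd, le_rfl⟩, le_rfl⟩)

lemma Cv_le_Ctilde : Cv v c a ≤ Ctilde v c a :=
  (le_max_right _ _).trans (le_max_right _ _)

lemma abv_degree_mul_pow_le_Ctilde_pow :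
    v ((n + 2 : ℕ) : K) * v a ^ (n + 2) ≤ Ctilde v c a ^ (n + 2) := by
  have h : v ((n + 2 : ℕ) : K) ^ ((1 : ℝ) / ((n : ℝ) + 2)) * v a ≤ Ctilde v c a :=
    ((le_max_left _ _).trans (le_max_right _ _)).trans (Cv_le_Ctilde v c a)
  rw [show (n : ℝ) + 2 = ((n + 2 : ℕ) : ℝ) by push_cast; ring] at h
  calc v ((n + 2 : ℕ) : K) * v a ^ (n + 2)
      = (v ((n + 2 : ℕ) : K) ^ ((1 : ℝ) / ((n + 2 : ℕ) : ℝ)) * v a) ^ (n + 2) := by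
        rw [mul_pow, one_div, Real.rpow_inv_natCast_pow (v.nonneg _) (by omega)]
    _ ≤ Ctilde v c a ^ (n + 2) := by gcongr

variable [CharZero K]

lemma abv_degree_pos : 0 < v ((n + 2 : ℕ) : K) :=
  v.pos (Nat.cast_ne_zero.2 (by omega))

lemma Ctilde_pos : 0 < Ctilde v c a :=
  (Real.rpow_pos_of_pos (abv_degree_pos v) _).trans_le
    ((le_max_left _ _).trans (Cv_le_Ctilde v c a))

lemma abv_degree_le_Ctilde_pow : v ((n + 2 : ℕ) : K) ≤ Ctilde v c a ^ (n + 1) := by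
  refine le_pow_of_rpow_one_div_le (v.nonneg _) (Ctilde_pos v c a).le n.succ_ne_zero ?_
  have h : v ((n + 2 : ℕ) : K) ^ ((1 : ℝ) / ((n : ℝ) + 1)) ≤ Ctilde v c a :=
    (le_max_left _ _).trans (Cv_le_Ctilde v c a)
  rwa [← Nat.cast_succ] at h

lemma abv_esymmK_mul_le_Ctilde_pow {j : ℕ} (hj : j ∈ Finset.Icc 2 (n + 1)) :
    v (esymmK c (n + 2 - j)) * (v ((n + 2 : ℕ) : K) / v (j : K))
      ≤ Ctilde v c a ^ (n + 2 - j) := by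
  have h : (v (esymmK c (n + 2 - j)) * v (((n + 2 : ℕ) : K) / (j : K)))
      ^ ((1 : ℝ) / ((n + 2 - j : ℕ) : ℝ)) ≤ Ctilde v c a :=
    (((Finset.le_fold_max _).2 (Or.inr ⟨j, hj, le_rfl⟩)).trans
      ((le_max_right _ _).trans (le_max_right _ _))).trans (Cv_le_Ctilde v c a)
  rw [map_div₀] at h
  exact le_pow_of_rpow_one_div_le (by positivity) (Ctilde_pos v c a).le
    (by simp only [Finset.mem_Icc] at hj; omega) h

end Ctilde

section Dynamics

variable [CharZero K] {v : AbsoluteValue K ℝ} {n : ℕ} (c : Fin n → K) (a : K)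

lemma abv_Pca_term_le {z : K} {s : ℝ} (hz : v z ≤ s) {j : ℕ} (hj : j ∈ Finset.Icc 2 (n + 1)) :
    v (((-1 : K) ^ (n + 2 - j) * esymmK c (n + 2 - j) * z ^ j) / (j : K))
      ≤ Ctilde v c a ^ (n + 2 - j) * s ^ j / v ((n + 2 : ℕ) : K) := by
  have hvj : 0 < v (j : K) :=
    v.pos (Nat.cast_ne_zero.2 (by simp only [Finset.mem_Icc] at hj; omega))
  have hvd := abv_degree_pos (K := K) v (n := n)
  calc v (((-1 : K) ^ (n + 2 - j) * esymmK c (n + 2 - j) * z ^ j) / (j : K))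
      = v (esymmK c (n + 2 - j)) * (v ((n + 2 : ℕ) : K) / v (j : K)) * v z ^ j
          / v ((n + 2 : ℕ) : K) := by
        simp only [map_div₀, map_mul, map_pow, v.map_neg, map_one, one_pow, one_mul]
        field_simp
    _ ≤ Ctilde v c a ^ (n + 2 - j) * s ^ j / v ((n + 2 : ℕ) : K) := by
        gcongr
        · exact pow_nonneg (Ctilde_pos v c a).le _
        · exact abv_esymmK_mul_le_Ctilde_pow v c a hj

lemma abv_pow_degree_le_Ctilde_pow_div :
    v (a ^ (n + 2)) ≤ Ctilde v c a ^ (n + 2) / v ((n + 2 : ℕ) : K) := by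
  rw [map_pow, le_div_iff₀ (abv_degree_pos v), mul_comm]
  exact abv_degree_mul_pow_le_Ctilde_pow v c a

lemma abv_Pca_le (hv : IsNonarchimedean v) (z : K) :
    v (Pca c a z) ≤ max (Ctilde v c a) (v z) ^ (n + 2) / v ((n + 2 : ℕ) : K) := by
  set t := max (Ctilde v c a) (v z)
  have hCt : Ctilde v c a ≤ t := le_max_left _ _
  have hvd := abv_degree_pos (K := K) v (n := n)
  have hlead : v (z ^ (n + 2) / ((n + 2 : ℕ) : K)) ≤ t ^ (n + 2) / v ((n + 2 : ℕ) : K) := by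
    rw [map_div₀, map_pow]
    gcongr
    exact le_max_right _ _
  have hsum : v (∑ j ∈ Finset.Icc 2 (n + 1),
      ((-1 : K) ^ (n + 2 - j) * esymmK c (n + 2 - j) * z ^ j) / (j : K))
        ≤ t ^ (n + 2) / v ((n + 2 : ℕ) : K) := by
    refine hv.abv_sum_le (by positivity) fun j hj => ?_
    have hjd : n + 2 - j + j = n + 2 := by simp only [Finset.mem_Icc] at hj; omega
    refine (abv_Pca_term_le c a (le_max_right _ _ : v z ≤ t) hj).trans ?_
    gcongr
    exact (pow_mul_pow_le_pow_add (Ctilde_pos v c a).le hCt _ _).trans_eq (by rw [hjd])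
  have hconst : v (a ^ (n + 2)) ≤ t ^ (n + 2) / v ((n + 2 : ℕ) : K) :=
    (abv_pow_degree_le_Ctilde_pow_div c a).trans (by gcongr; exact (Ctilde_pos v c a).le)
  exact (hv _ _).trans (max_le ((hv _ _).trans (max_le hlead hsum)) hconst)

lemma abv_Pca_eq (hv : IsNonarchimedean v) {z : K} (hz : Ctilde v c a < v z) :
    v (Pca c a z) = v z ^ (n + 2) / v ((n + 2 : ℕ) : K) := by
  have hCt := (Ctilde_pos v c a).le
  have hvd := abv_degree_pos (K := K) v (n := n)
  have hlead : v (z ^ (n + 2) / ((n + 2 : ℕ) : K)) = v z ^ (n + 2) / v ((n + 2 : ℕ) : K) := by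
    rw [map_div₀, map_pow]
  have hsum : v (∑ j ∈ Finset.Icc 2 (n + 1),
      ((-1 : K) ^ (n + 2 - j) * esymmK c (n + 2 - j) * z ^ j) / (j : K))
        < v z ^ (n + 2) / v ((n + 2 : ℕ) : K) := by
    refine hv.abv_sum_lt (by have := hCt.trans_lt hz; positivity) fun j hj => ?_
    rw [Finset.mem_Icc] at hj
    have hjd : n + 2 - j + j = n + 2 := by omega
    refine (abv_Pca_term_le c a le_rfl (Finset.mem_Icc.2 hj)).trans_lt ?_
    gcongr
    exact (pow_mul_pow_lt_pow_add hCt hz (by omega) _).trans_eq (by rw [hjd])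
  have hconst : v (a ^ (n + 2)) < v z ^ (n + 2) / v ((n + 2 : ℕ) : K) :=
    (abv_pow_degree_le_Ctilde_pow_div c a).trans_lt (by gcongr)
  rw [Pca, hv.add_eq_left_of_lt, hv.add_eq_left_of_lt, hlead]
  · rwa [hlead]
  · rwa [hv.add_eq_left_of_lt (by rwa [hlead]), hlead]


lemma hca_Pca_le (hv : IsNonarchimedean v) (z : K) :
    hca v c a (Pca c a z) ≤ ((n : ℝ) + 2) * hca v c a z + Real.log (alphaV v (n + 2)) := by
  set t := max (Ctilde v c a) (v z)
  set D := v ((n + 2 : ℕ) : K)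
  have hCt := Ctilde_pos v c a
  have ht : 0 < t := lt_max_of_lt_left hCt
  have hD : 0 < D := abv_degree_pos v
  have hα : D⁻¹ ≤ alphaV v (n + 2) := inv_abv_natCast_le_alphaV v (by omega)
  have hα0 : 0 < alphaV v (n + 2) := (inv_pos.2 hD).trans_le hα
  have htD : t ≤ t ^ (n + 2) / D := by
    rw [le_div_iff₀ hD, pow_succ']
    gcongr
    exact (abv_degree_le_Ctilde_pow v c a).trans (by gcongr; exact le_max_left _ _)
  have hbound : t ^ (n + 2) / D ≤ alphaV v (n + 2) * t ^ (n + 2) := by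
    rw [div_eq_inv_mul]
    gcongr
  have hmax : max (Ctilde v c a) (v (Pca c a z)) ≤ alphaV v (n + 2) * t ^ (n + 2) :=
    max_le ((le_max_left _ _).trans (htD.trans hbound)) ((abv_Pca_le c a hv z).trans hbound)
  calc hca v c a (Pca c a z) ≤ Real.log (alphaV v (n + 2) * t ^ (n + 2)) :=
        Real.log_le_log (lt_max_of_lt_left hCt) hmax
    _ = ((n : ℝ) + 2) * hca v c a z + Real.log (alphaV v (n + 2)) := by
        rw [Real.log_mul hα0.ne' (by positivity), Real.log_pow, hca]
        push_cast
        ring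

lemma hca_Pca_ge (hv : IsNonarchimedean v) (z : K) :
    ((n : ℝ) + 2) * hca v c a z - ((n : ℝ) + 1) * |Real.log (Ctilde v c a)|
      ≤ hca v c a (Pca c a z) := by
  have hCt := Ctilde_pos v c a
  rcases le_or_gt (v z) (Ctilde v c a) with hz | hz
  · have hlog : Real.log (Ctilde v c a) ≤ hca v c a (Pca c a z) :=
      Real.log_le_log hCt (le_max_left _ _)
    have habs : ((n : ℝ) + 1) * Real.log (Ctilde v c a)
        ≤ ((n : ℝ) + 1) * |Real.log (Ctilde v c a)| := by
      gcongr
      exact le_abs_self _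
    rw [hca, max_eq_left hz]
    linarith
  · have hz0 : 0 < v z := hCt.trans hz
    have hPz : v z ^ (n + 2) ≤ v (Pca c a z) := by
      rw [abv_Pca_eq c a hv hz]
      exact le_div_self (by positivity) (abv_degree_pos v) hv.apply_natCast_le_one
    have hlog : ((n : ℝ) + 2) * Real.log (v z) ≤ hca v c a (Pca c a z) := by
      calc ((n : ℝ) + 2) * Real.log (v z) = Real.log (v z ^ (n + 2)) := by
            rw [Real.log_pow]
            push_cast
            ring
        _ ≤ hca v c a (Pca c a z) :=
            Real.log_le_log (by positivity) (hPz.trans (le_max_right _ _))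
    have habs : 0 ≤ ((n : ℝ) + 1) * |Real.log (Ctilde v c a)| := by positivity
    rw [hca, max_eq_right hz.le]
    linarith

def greenFun (v : AbsoluteValue K ℝ) (c : Fin n → K) (a z : K) : ℝ :=
  limUnder atTop fun m => hca v c a ((Pca c a)^[m] z) / ((n : ℝ) + 2) ^ m

lemma tendsto_greenFun (hv : IsNonarchimedean v) (z : K) :
    Tendsto (fun m => hca v c a ((Pca c a)^[m] z) / ((n : ℝ) + 2) ^ m) atTop
      (𝓝 (greenFun v c a z)) := by
  have hd : (1 : ℝ) < (n : ℝ) + 2 := by linarith [n.cast_nonneg (α := ℝ)]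
  refine (cauchySeq_div_pow_of_growth hd (L := Real.log (alphaV v (n + 2)))
    (B := ((n : ℝ) + 1) * |Real.log (Ctilde v c a)|) (fun m => ?_) (fun m => ?_)).tendsto_limUnder
  · rw [Function.iterate_succ_apply']
    exact hca_Pca_le c a hv _
  · rw [Function.iterate_succ_apply']
    exact hca_Pca_ge c a hv _

lemma greenFun_le (hv : IsNonarchimedean v) (z : K) :
    greenFun v c a z ≤ hca v c a (Pca c a z) / ((n : ℝ) + 2)
      + Real.log (alphaV v (n + 2)) / (((n : ℝ) + 2) * ((n : ℝ) + 1)) := by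
  have hd : (1 : ℝ) < (n : ℝ) + 2 := by linarith [n.cast_nonneg (α := ℝ)]
  have h := le_of_tendsto_div_pow hd (L := Real.log (alphaV v (n + 2)))
    (fun m => by rw [Function.iterate_succ_apply']; exact hca_Pca_le c a hv _)
    (tendsto_greenFun c a hv z)
  rwa [Function.iterate_one, show (n : ℝ) + 2 - 1 = (n : ℝ) + 1 by ring] at h

lemma hca_Pca_crit_le_of_notMem_Uset {i : Fin (n + 1)} {A C ε : ℝ}
    (hCt : Ctilde v c a ≤ A * max 1 (max (cnorm v c) (v a))) (hC : 1 ≤ C) (hε : 0 < ε)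
    (hCε : A * C < C ^ (n + 2) * ε) (hM : C ≤ max (cnorm v c) (v a))
    (hU : (c, a) ∉ Uset v i ε C) :
    hca v c a (Pca c a (crit c i))
      ≤ Real.log ε + ((n : ℝ) + 2) * Real.log (max (cnorm v c) (v a)) := by
  set M := max (cnorm v c) (v a)
  have hPcrit : v (Pca c a (crit c i)) < ε * M ^ (n + 2) := by
    simp only [Uset, Set.mem_ofPred_eq, not_and, not_le] at hU
    exact hU hM
  have hCtM : Ctilde v c a ≤ ε * M ^ (n + 2) := by
    rw [max_eq_right (hC.trans hM)] at hCt
    exact hCt.trans (mul_le_mul_pow_of_mul_lt_pow (by linarith) hM hε.le hCε)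
  calc hca v c a (Pca c a (crit c i)) ≤ Real.log (ε * M ^ (n + 2)) :=
        Real.log_le_log (lt_max_of_lt_left (Ctilde_pos v c a)) (max_le hCtM hPcrit.le)
    _ = Real.log ε + ((n : ℝ) + 2) * Real.log M := by
        rw [Real.log_mul hε.ne' (by have := hC.trans hM; positivity), Real.log_pow]
        push_cast
        ring

end Dynamics

theorem statement8_general {K : Type*} [Field K] [CharZero K]
    (v : AbsoluteValue K ℝ) (hv : ∀ x y : K, v (x + y) ≤ max (v x) (v y)) (n : ℕ)
    (Cv0 : ℝ)
    (hCt : ∀ (c : Fin n → K) (a : K), Ctilde v c a ≤ Cv0 * max 1 (max (cnorm v c) (v a))) :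
    ∃ g : (Fin n → K) → K → K → ℝ,
      -- `g` is the `v`-adic Green function
      (∀ (c : Fin n → K) (a z : K),
        Tendsto (fun m : ℕ => hca v c a ((Pca c a)^[m] z) / ((n : ℝ) + 2) ^ m)
          atTop (nhds (g c a z))) ∧
      ∀ (i : Fin (n + 1)) (C ε : ℝ) (c : Fin n → K) (a : K),
        1 ≤ C → 0 < ε → max 1 (Cv0 * C) < C ^ (n + 2) * ε →
        C ≤ max (cnorm v c) (v a) → (c, a) ∉ Uset v i ε C →
        g c a (crit c i)
          ≤ Real.log (max (cnorm v c) (v a)) + (1 / ((n : ℝ) + 2)) * Real.log ε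
            + (1 / (((n : ℝ) + 2) * ((n : ℝ) + 1))) * Real.log (alphaV v (n + 2)) := by
  refine ⟨greenFun v, fun c a z => tendsto_greenFun c a hv z, ?_⟩
  intro i C ε c a hC hε hCε hM hU
  have hPcrit := hca_Pca_crit_le_of_notMem_Uset c a (hCt c a) hC hε
    ((le_max_right _ _).trans_lt hCε) hM hU
  calc greenFun v c a (crit c i)
      ≤ hca v c a (Pca c a (crit c i)) / ((n : ℝ) + 2)
        + Real.log (alphaV v (n + 2)) / (((n : ℝ) + 2) * ((n : ℝ) + 1)) := greenFun_le c a hv _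
    _ ≤ (Real.log ε + ((n : ℝ) + 2) * Real.log (max (cnorm v c) (v a))) / ((n : ℝ) + 2)
        + Real.log (alphaV v (n + 2)) / (((n : ℝ) + 2) * ((n : ℝ) + 1)) := by gcongr
    _ = Real.log (max (cnorm v c) (v a)) + (1 / ((n : ℝ) + 2)) * Real.log ε
        + (1 / (((n : ℝ) + 2) * ((n : ℝ) + 1))) * Real.log (alphaV v (n + 2)) := by
        field_simp
        ring

/-- let `C_v ≥ 1` be a constant with `C̃_v(c,a) ≤ C_v·max{1,|c|_v,|a|_v}` for
all `(c,a)`. Then for all `i`, `C ≥ 1`, `ε > 0` with `C^d·ε > max{1, C_v·C}`, and all `(c,a)`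
with `max{|c|_v,|a|_v} ≥ C` and `(c,a) ∉ U_i(ε,C)`, one has
`g_{c,a,v}(c_i) ≤ log max{|c|_v,|a|_v} + (1/d)·log ε + (1/(d(d-1)))·log α_v`.
Here `d = n + 2`. -/
theorem statement8 {K : Type*} [Field K] [IsAlgClosed K] [CharZero K]
    (v : AbsoluteValue K ℝ) (hv : ∀ x y : K, v (x + y) ≤ max (v x) (v y)) (n : ℕ)
    (Cv0 : ℝ) (hCv0 : 1 ≤ Cv0)
    (hCt : ∀ (c : Fin n → K) (a : K), Ctilde v c a ≤ Cv0 * max 1 (max (cnorm v c) (v a))) :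
    ∃ g : (Fin n → K) → K → K → ℝ,
      -- `g` is the `v`-adic Green function
      (∀ (c : Fin n → K) (a z : K),
        Tendsto (fun m : ℕ => hca v c a ((Pca c a)^[m] z) / ((n : ℝ) + 2) ^ m)
          atTop (nhds (g c a z))) ∧
      ∀ (i : Fin (n + 1)) (C ε : ℝ) (c : Fin n → K) (a : K),
        1 ≤ C → 0 < ε → max 1 (Cv0 * C) < C ^ (n + 2) * ε →
        C ≤ max (cnorm v c) (v a) → (c, a) ∉ Uset v i ε C →
        g c a (crit c i)
          ≤ Real.log (max (cnorm v c) (v a)) + (1 / ((n : ℝ) + 2)) * Real.log ε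
            + (1 / (((n : ℝ) + 2) * ((n : ℝ) + 1))) * Real.log (alphaV v (n + 2)) :=
  statement8_general v hv n Cv0 hCt
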